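/- arXiv:2306.10497 — 3 statements merged into one kernel-verified Lean document; each statement's English description precedes it below -/
import Mathlib

section
/- Let {a_n} be the (4,1)-recurrent sequence with a_0 = a_1 = 1, and define b_n = Σ_{i=1}^{n} a_i·a_{n+1-i}. Then for all n ≥ 3, b_n - b_{n-2} = n·a_n - (n-2)·a_{n-1}. -/
def seqA : ℕ → ℤ
  | 0 => 1
  | 1 => 1
  | n + 2 => 4 * seqA (n + 1) - seqA n

def seqS : ℕ → ℤ
  | 0 => 0
  | 1 => 1
  | n + 2 => 4 * seqS (n + 1) - seqS n

def seqB (n : ℕ) : ℤ := ∑ i ∈ Finset.Icc 1 n, seqA i * seqA (n + 1 - i)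

lemma seqB_eq (n : ℕ) : seqB n = ∑ i ∈ Finset.range n, seqA (i + 1) * seqA (n - i) := by
  unfold seqB
  rw [show Finset.Icc 1 n = Finset.Ico 1 (n + 1) from by rw [Finset.Ico_add_one_right_eq_Icc],
    Finset.sum_Ico_eq_sum_range]
  apply Finset.sum_congr (by congr 1)
  intro i hi
  simp only [Finset.mem_range] at hi
  rw [show 1 + i = i + 1 from by omega, show n + 1 - (i + 1) = n - i from by omega]

lemma seqB_key (n : ℕ) : seqB (n + 2) = 4 * seqB (n + 1) - seqB n - seqA (n + 1) + seqA (n + 2) := by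
  rw [seqB_eq, seqB_eq, seqB_eq]
  rw [Finset.sum_range_succ (n := n + 1)]
  have h : ∀ i ∈ Finset.range (n + 1), seqA (i + 1) * seqA (n + 2 - i)
      = 4 * (seqA (i + 1) * seqA (n + 1 - i)) - seqA (i + 1) * seqA (n - i) := by
    intro i hi
    simp only [Finset.mem_range] at hi
    have h2 : n + 2 - i = (n - i) + 2 := by omega
    have h1 : n + 1 - i = (n - i) + 1 := by omega
    rw [h2, h1, seqA]
    ring
  rw [Finset.sum_congr rfl h, Finset.sum_sub_distrib, ← Finset.mul_sum,
    Finset.sum_range_succ (f := fun i => seqA (i + 1) * seqA (n - i))]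
  simp only [show n + 2 - (n + 1) = 1 from by omega, show n + 1 + 1 = n + 2 from by omega,
    Nat.sub_self]
  show 4 * _ - (_ + seqA (n + 1) * seqA 0) + seqA (n + 2) * seqA 1 = _
  show _ = 4 * _ - _ - seqA (n + 1) + seqA (n + 2)
  rw [show seqA 0 = 1 from rfl, show seqA 1 = 1 from rfl]
  ring

lemma aux : ∀ m : ℕ, seqB (m + 3) - seqB (m + 1)
    = ((m : ℤ) + 3) * seqA (m + 3) - ((m : ℤ) + 1) * seqA (m + 2) := by
  have base : ∀ m < 2, seqB (m + 3) - seqB (m + 1)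
      = ((m : ℤ) + 3) * seqA (m + 3) - ((m : ℤ) + 1) * seqA (m + 2) := by
    decide
  intro m
  induction m using Nat.strong_induction_on with
  | _ m ih =>
    match m, ih with
    | 0, _ => exact base 0 (by norm_num)
    | 1, _ => exact base 1 (by norm_num)
    | (m + 2), ih =>
      have i1 := ih (m + 1) (by omega)
      have i2 := ih m (by omega)
      have k1 := seqB_key (m + 3)
      have k2 := seqB_key (m + 1)
      have r1 : seqA (m + 4) = 4 * seqA (m + 3) - seqA (m + 2) := by
        show seqA (m + 2 + 2) = _; rw [seqA]
      have r2 : seqA (m + 5) = 4 * seqA (m + 4) - seqA (m + 3) := by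
        show seqA (m + 3 + 2) = _; rw [seqA]
      push_cast
      have e1 : m + 2 + 3 = m + 5 := by ring
      have e2 : m + 2 + 2 = m + 4 := by ring
      have e3 : m + 1 + 3 = m + 4 := by ring
      have e4 : m + 1 + 2 = m + 3 := by ring
      have e5 : m + 3 + 2 = m + 5 := by ring
      have e6 : m + 3 + 1 = m + 4 := by ring
      have e7 : m + 1 + 1 = m + 2 := by ring
      rw [e1, e2]
      rw [e3, e4] at i1
      rw [e5, e6] at k1
      rw [e7] at k2
      push_cast at i1 i2
      linear_combination k1 - k2 + 4 * i1 - i2 + ((m : ℤ) + 2) * r1 - ((m : ℤ) + 4) * r2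

theorem stmt_9 : ∀ n : ℕ, 3 ≤ n →
    seqB n - seqB (n - 2) = (n : ℤ) * seqA n - ((n : ℤ) - 2) * seqA (n - 1) := by
  intro n hn
  obtain ⟨m, rfl⟩ : ∃ m, n = m + 3 := ⟨n - 3, by omega⟩
  have h1 : m + 3 - 2 = m + 1 := by omega
  have h2 : m + 3 - 1 = m + 2 := by omega
  rw [h1, h2]
  have := aux m
  push_cast
  linarith [aux m]
end

section
/- Let {a_n} and {s_n} be the (4,1)-recurrent sequences with a_0 = a_1 = 1 and s_0 = 0, s_1 = 1. Then for all n ≥ 1, 2·Σ_{1 ≤ i < j ≤ n+1} a_i·a_{n+2-j} - Σ_{i=1}^{n} a_i·a_{n+1-i} = n·s_n. -/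
/-!
Since `s (t + 1) - s t = a (t + 1)`, the inner sums are partial sums of `a` and collapse to
values of `s`, and the left-hand side becomes the truncated convolution
`W n = ∑_{t < n} (s (t + 1) + s t) · a (n - t)`. Because `a` satisfies `x (m + 2) = 4 x (m + 1) - x m`,
`W` satisfies the inhomogeneous recurrence `W (n + 2) = 4 W (n + 1) - W n + s (n + 2) - s n`;
so does `n · s n`, and both agree at `n = 0, 1`.
-/

open Finset

section Recurrence

variable {R : Type*} [CommRing R]

theorem eq_of_linear_recurrence {u v g : ℕ → R} (p q : R)
    (hu : ∀ n, u (n + 2) = p * u (n + 1) + q * u n + g n)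
    (hv : ∀ n, v (n + 2) = p * v (n + 1) + q * v n + g n)
    (h₀ : u 0 = v 0) (h₁ : u 1 = v 1) : u = v := by
  funext n
  induction n using Nat.twoStepInduction with
  | zero => exact h₀
  | one => exact h₁
  | more n ih₀ ih₁ => rw [hu, hv, ih₀, ih₁]

def truncConv (c f : ℕ → R) (n : ℕ) : R := ∑ i ∈ range n, c i * f (n - i)

theorem truncConv_add_two {f : ℕ → R} (p q : R)
    (hf : ∀ m, f (m + 2) = p * f (m + 1) + q * f m) (c : ℕ → R) (n : ℕ) :
    truncConv c f (n + 2) = p * truncConv c f (n + 1) + q * truncConv c f n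
      + c (n + 1) * f 1 + c n * (f 2 - p * f 1) := by
  have hsum : ∑ i ∈ range n, c i * f (n + 2 - i)
      = p * ∑ i ∈ range n, c i * f (n + 1 - i) + q * truncConv c f n := by
    rw [truncConv, mul_sum, mul_sum, ← sum_add_distrib]
    refine sum_congr rfl fun i hi => ?_
    rw [show n + 2 - i = n - i + 2 by grind, show n + 1 - i = n - i + 1 by grind, hf]
    ring
  simp only [truncConv, sum_range_succ, hsum, add_tsub_cancel_left, Nat.reduceSubDiff]
  ring

end Recurrence

theorem sum_Icc_one_eq_sum_range {M : Type*} [AddCommMonoid M] (f : ℕ → M) (n : ℕ) :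
    ∑ i ∈ Icc 1 n, f i = ∑ i ∈ range n, f (i + 1) := by
  rw [← Ico_add_one_right_eq_Icc, sum_Ico_eq_sum_range]
  simp [add_comm]

theorem seqA_add_two (n : ℕ) : seqA (n + 2) = 4 * seqA (n + 1) - seqA n := rfl

theorem seqS_add_two (n : ℕ) : seqS (n + 2) = 4 * seqS (n + 1) - seqS n := rfl

theorem seqS_succ_sub (n : ℕ) : seqS (n + 1) - seqS n = seqA (n + 1) := by
  induction n using Nat.twoStepInduction with
  | zero => rfl
  | one => rfl
  | more n ih₀ ih₁ =>
    linear_combination seqS_add_two (n + 1) - seqS_add_two n - seqA_add_two (n + 1) + 4 * ih₁ - ih₀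

theorem sum_Ico_one_seqA (t : ℕ) : ∑ i ∈ Ico 1 (t + 1), seqA i = seqS t := by
  induction t with
  | zero => rfl
  | succ t ih => rw [sum_Ico_succ_top (by omega), ih, ← seqS_succ_sub]; ring

theorem truncConv_seqA (n : ℕ) :
    truncConv (fun i => seqS (i + 1) + seqS i) seqA n = n * seqS n := by
  refine congrFun (eq_of_linear_recurrence (u := truncConv (fun i => seqS (i + 1) + seqS i) seqA)
    (v := fun n => n * seqS n) 4 (-1) (g := fun n => seqS (n + 2) - seqS n)
    (fun n => ?_) (fun n => ?_) rfl rfl) n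
  · rw [truncConv_add_two 4 (-1) (fun m => by rw [seqA_add_two]; ring)]
    simp only [seqA]
    ring
  · push_cast
    linear_combination (n + 1 : ℤ) * seqS_add_two n

theorem stmt_12 : ∀ n : ℕ, 1 ≤ n →
    2 * ∑ j ∈ Finset.Icc 1 (n + 1), ∑ i ∈ Finset.Ico 1 j, seqA i * seqA (n + 2 - j)
      - ∑ i ∈ Finset.Icc 1 n, seqA i * seqA (n + 1 - i)
      = (n : ℤ) * seqS n := by
  intro n _
  have hT : ∑ j ∈ Icc 1 (n + 1), ∑ i ∈ Ico 1 j, seqA i * seqA (n + 2 - j)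
      = ∑ t ∈ range n, seqS (t + 1) * seqA (n - t) := by
    simp [sum_Icc_one_eq_sum_range, ← sum_mul, sum_Ico_one_seqA, sum_range_succ' _ n, seqS]
  have hU : ∑ i ∈ Icc 1 n, seqA i * seqA (n + 1 - i)
      = ∑ t ∈ range n, seqA (t + 1) * seqA (n - t) := by
    simp [sum_Icc_one_eq_sum_range]
  rw [hT, hU, ← truncConv_seqA, truncConv, mul_sum, ← sum_sub_distrib]
  refine sum_congr rfl fun t _ => ?_
  rw [← seqS_succ_sub]
  ring
end

section
/- Let {a_n} and {s_n} be the (4,1)-recurrent sequences with a_0 = a_1 = 1, s_0 = 0, s_1 = 1. If n = 2k is even (k ≥ 1), then (a_{n+1} + a_n - 2)·(s_{k+1} - s_{k-1}) = (a_{n+1} - a_n)·(s_{k+1} + 2s_k + s_{k-1}). -/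
lemma seqA_eq (n : ℕ) : seqA (n + 1) = seqS (n + 1) - seqS n := by
  induction n using Nat.strong_induction_on with
  | _ n ih =>
    match n with
    | 0 => simp [seqA, seqS]
    | 1 => simp [seqA, seqS]
    | m + 2 =>
      have h1 := ih (m + 1) (by omega)
      have h0 := ih m (by omega)
      show seqA (m + 3) = _
      have e3 : seqS (m + 3) = 4 * seqS (m + 2) - seqS (m + 1) := rfl
      have e2 : seqS (m + 2) = 4 * seqS (m + 1) - seqS m := rfl
      rw [show m + 3 = (m + 1) + 2 from rfl, seqA, h1, h0,
        show m + 2 + 1 = m + 3 from rfl, e3, e2]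
      ring

lemma seqS_double (k : ℕ) :
    seqS (2 * k + 1) = seqS (k + 1) ^ 2 - seqS k ^ 2 ∧
    seqS (2 * k) = 2 * seqS k * seqS (k + 1) - 4 * seqS k ^ 2 := by
  induction k with
  | zero => simp [seqS]
  | succ m ih =>
    obtain ⟨h1, h0⟩ := ih
    have e2 : seqS (2 * (m + 1)) = 4 * seqS (2 * m + 1) - seqS (2 * m) := by
      rw [show 2 * (m + 1) = 2 * m + 2 from by ring]; rfl
    have e3 : seqS (2 * (m + 1) + 1) = 4 * seqS (2 * (m + 1)) - seqS (2 * m + 1) := by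
      rw [show 2 * (m + 1) + 1 = (2 * m + 1) + 2 from by ring,
        show 2 * (m + 1) = 2 * m + 2 from by ring]; rfl
    have er : seqS (m + 2) = 4 * seqS (m + 1) - seqS m := rfl
    constructor
    · rw [e3, e2, h1, h0, er]; ring
    · rw [e2, h1, h0, er]; ring

lemma seqS_inv (k : ℕ) :
    seqS (k + 1) ^ 2 - 4 * seqS (k + 1) * seqS k + seqS k ^ 2 = 1 := by
  induction k with
  | zero => simp [seqS]
  | succ m ih =>
    have er : seqS (m + 2) = 4 * seqS (m + 1) - seqS m := rfl
    rw [er]; linear_combination ih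

theorem stmt_14 : ∀ k : ℕ, 1 ≤ k → ∀ n : ℕ, n = 2 * k →
    (seqA (n + 1) + seqA n - 2) * (seqS (k + 1) - seqS (k - 1))
      = (seqA (n + 1) - seqA n) * (seqS (k + 1) + 2 * seqS k + seqS (k - 1)) := by
  intro k hk n hn
  obtain ⟨m, rfl⟩ : ∃ m, k = m + 1 := ⟨k - 1, by omega⟩
  subst hn
  have hA1 : seqA (2 * (m + 1) + 1) = seqS (2 * (m + 1) + 1) - seqS (2 * (m + 1)) :=
    seqA_eq _
  have hA0 : seqA (2 * (m + 1)) = seqS (2 * (m + 1)) - seqS (2 * m + 1) := by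
    have := seqA_eq (2 * m + 1)
    rwa [show 2 * m + 1 + 1 = 2 * (m + 1) from by ring] at this
  obtain ⟨d1, d0⟩ := seqS_double (m + 1)
  have d1' := (seqS_double m).1
  have hv : seqS m = 4 * seqS (m + 1) - seqS (m + 2) := by
    have : seqS (m + 2) = 4 * seqS (m + 1) - seqS m := rfl
    linarith
  have hinv := seqS_inv (m + 1)
  simp only [show m + 1 - 1 = m from rfl, show m + 1 + 1 = m + 2 from rfl] at *
  rw [hA1, hA0, d1, d0, d1', hv] at *
  linear_combination (4 * seqS (m + 2) - 8 * seqS (m + 1)) * hinv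
end
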